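/- Let t₁, …, tₙ (n ≥ 3) be finite trees, each with at least two vertices and a designated root of degree one, and let T be the graph obtained from their disjoint union by identifying all the roots to a single vertex ρ. Let π be a partition of the vertex set of T whose restriction to the vertex set of each t_i is the discrete partition. Suppose there are indices i, j, k with j ≠ k and i ∉ {j, k}, and vertices v, w of t_i distinct from ρ, v' of t_j distinct from ρ, and w' of t_k distinct from ρ, such that v and v' lie in the same block of π and w and w' lie in the same block of π. Then the quotient T^π is not a cactus. -/

import Mathlib

set_option autoImplicit false

/-! ## Multigraphs -/

/-- A multigraph: a vertex type `V`, an edge type `E`, and an assignment to each edge of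
its unordered pair of endpoints.  Loops and parallel edges are allowed. -/
structure Multigraph (V E : Type) where
  ends : E → Sym2 V

namespace Multigraph

variable {V E : Type}

/-- `G.ReachAvoid F u v` : `v` can be reached from `u` by a walk using no edge of `F`. -/
inductive ReachAvoid (G : Multigraph V E) (F : Set E) : V → V → Prop
  | refl (v : V) : ReachAvoid G F v v
  | tail {u v w : V} (e : E) (he : e ∉ F) (hvw : G.ends e = s(v, w))
      (h : ReachAvoid G F u v) : ReachAvoid G F u w

/-- A multigraph is connected if any two vertices are joined by a walk. -/
def Connected (G : Multigraph V E) : Prop := ∀ u v : V, G.ReachAvoid ∅ u v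

/-- `F` is a set of edges whose deletion disconnects `v` from `w`. -/
def IsEdgeCut (G : Multigraph V E) (v w : V) (F : Set E) : Prop := ¬ G.ReachAvoid F v w

/-- Edge connectivity `λ(v, w)`: the minimum number of edges whose deletion
disconnects `v` from `w`. -/
noncomputable def edgeConn (G : Multigraph V E) (v w : V) : ℕ :=
  sInf {k : ℕ | ∃ F : Finset E, F.card = k ∧ G.IsEdgeCut v w ↑F}

/-- Walks in a multigraph, recorded together with the edges they traverse. -/
inductive Walk (G : Multigraph V E) : V → V → Type
  | nil (v : V) : Walk G v v
  | cons {u v w : V} (e : E) (huv : G.ends e = s(u, v)) (p : Walk G v w) : Walk G u w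

namespace Walk

variable {G : Multigraph V E}

/-- The list of edges traversed by a walk. -/
def edges : ∀ {u v : V}, G.Walk u v → List E
  | _, _, .nil _ => []
  | _, _, .cons e _ p => e :: edges p

/-- The list of vertices visited by a walk (including both endpoints). -/
def verts : ∀ {u v : V}, G.Walk u v → List V
  | _, v, .nil _ => [v]
  | u, _, .cons _ _ p => u :: verts p

/-- A walk is a path if it visits no vertex twice. -/
def IsPath {u v : V} (p : G.Walk u v) : Prop := p.verts.Nodup

end Walk

/-- `S` is the edge set of a simple cycle of `G`: a nonempty closed walk with no repeated
edges and no repeated vertices (other than the final return to the starting point).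
A loop is a simple cycle of length one. -/
def IsSimpleCycleOn [DecidableEq E] (G : Multigraph V E) (S : Finset E) : Prop :=
  ∃ (v : V) (p : G.Walk v v),
    p.edges ≠ [] ∧ p.edges.Nodup ∧ p.verts.dropLast.Nodup ∧ p.edges.toFinset = S

/-- A cactus: a connected multigraph in which every edge lies on exactly one simple cycle
(simple cycles being identified with their edge sets). -/
def IsCactus [DecidableEq E] (G : Multigraph V E) : Prop :=
  G.Connected ∧ ∀ e : E, ∃! S : Finset E, G.IsSimpleCycleOn S ∧ e ∈ S

/-- Two-edge-connected: connected, and still connected after deleting any single edge. -/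
def TwoEdgeConnected (G : Multigraph V E) : Prop :=
  G.Connected ∧ ∀ (e : E) (u v : V), G.ReachAvoid {e} u v

/-- The quotient multigraph by a partition (setoid) of the vertices: the vertices are the
blocks, and each edge joins the blocks of its original endpoints. -/
def quot (G : Multigraph V E) (σ : Setoid V) : Multigraph (Quotient σ) E :=
  ⟨fun e => (G.ends e).map (Quotient.mk σ)⟩

/-- Degree of a vertex: the number of edge-incidences at it (loops count twice). -/
def degree [DecidableEq V] [Fintype E] (G : Multigraph V E) (v : V) : ℕ :=
  ∑ e : E,
    Sym2.lift
      ⟨fun a b => (if a = v then 1 else 0) + (if b = v then 1 else 0),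
        fun _ _ => add_comm _ _⟩ (G.ends e)

/-- A leaf is a vertex of degree one. -/
def IsLeaf [DecidableEq V] [Fintype E] (G : Multigraph V E) (v : V) : Prop :=
  G.degree v = 1

/-- A tree: a connected multigraph with no simple cycles. -/
def IsTree [DecidableEq E] (G : Multigraph V E) : Prop :=
  G.Connected ∧ ∀ S : Finset E, ¬ G.IsSimpleCycleOn S

end Multigraph

/-- An embedding of the multigraph `H` into `G`, realizing `H` as a subgraph of `G`. -/
structure Multigraph.Embedding {W F V E : Type} (H : Multigraph W F) (G : Multigraph V E) where
  vmap : W → V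
  emap : F → E
  vmap_inj : Function.Injective vmap
  emap_inj : Function.Injective emap
  ends_map : ∀ f : F, G.ends (emap f) = (H.ends f).map vmap

/-! ## Multidigraphs -/

/-- A multidigraph: vertex type `V`, edge type `E`, and source and target maps. -/
structure Multidigraph (V E : Type) where
  src : E → V
  tgt : E → V

namespace Multidigraph

variable {V E : Type}

/-- The underlying multigraph of a multidigraph. -/
def toMultigraph (D : Multidigraph V E) : Multigraph V E :=
  ⟨fun e => s(D.src e, D.tgt e)⟩

/-- Directed walks in a multidigraph. -/
inductive DiWalk (D : Multidigraph V E) : V → V → Type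
  | nil (v : V) : DiWalk D v v
  | cons {u v w : V} (e : E) (hs : D.src e = u) (ht : D.tgt e = v)
      (p : DiWalk D v w) : DiWalk D u w

namespace DiWalk

variable {D : Multidigraph V E}

/-- The list of edges traversed by a directed walk. -/
def edges : ∀ {u v : V}, D.DiWalk u v → List E
  | _, _, .nil _ => []
  | _, _, .cons e _ _ p => e :: edges p

/-- The list of vertices visited by a directed walk. -/
def verts : ∀ {u v : V}, D.DiWalk u v → List V
  | _, v, .nil _ => [v]
  | u, _, .cons _ _ _ p => u :: verts p

end DiWalk

/-- `S` is the edge set of a simple directed cycle of `D`. -/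
def IsDiCycleOn [DecidableEq E] (D : Multidigraph V E) (S : Finset E) : Prop :=
  ∃ (v : V) (p : D.DiWalk v v),
    p.edges ≠ [] ∧ p.edges.Nodup ∧ p.verts.dropLast.Nodup ∧ p.edges.toFinset = S

/-- An oriented cactus: the underlying multigraph is a cactus and each of its simple
cycles (pads) is a directed cycle. -/
def IsOrientedCactus [DecidableEq E] (D : Multidigraph V E) : Prop :=
  D.toMultigraph.IsCactus ∧
    ∀ S : Finset E, D.toMultigraph.IsSimpleCycleOn S → D.IsDiCycleOn S

/-- The quotient multidigraph by a partition (setoid) of the vertices. -/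
def quot (D : Multidigraph V E) (σ : Setoid V) : Multidigraph (Quotient σ) E where
  src := fun e => Quotient.mk σ (D.src e)
  tgt := fun e => Quotient.mk σ (D.tgt e)

/-- Indegree of a vertex: the number of edges with target `v`. -/
def indeg [DecidableEq V] [Fintype E] (D : Multidigraph V E) (v : V) : ℕ :=
  (Finset.univ.filter fun e => D.tgt e = v).card

/-- Outdegree of a vertex: the number of edges with source `v`. -/
def outdeg [DecidableEq V] [Fintype E] (D : Multidigraph V E) (v : V) : ℕ :=
  (Finset.univ.filter fun e => D.src e = v).card

end Multidigraph

/-- An embedding of the multidigraph `H` into `G`, realizing `H` as a subgraph of `G`. -/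
structure Multidigraph.Embedding {W F V E : Type}
    (H : Multidigraph W F) (G : Multidigraph V E) where
  vmap : W → V
  emap : F → E
  vmap_inj : Function.Injective vmap
  emap_inj : Function.Injective emap
  src_map : ∀ f : F, G.src (emap f) = vmap (H.src f)
  tgt_map : ∀ f : F, G.tgt (emap f) = vmap (H.tgt f)

/-! ## Cycle graphs and non-crossing partitions -/

/-- The cycle graph of length `n`: vertices `Fin n`, edges `Fin n`, edge `i` joining
`v i` and `v (i+1)` (indices mod `n`). -/
def cycleGraph (n : ℕ) [NeZero n] : Multigraph (Fin n) (Fin n) :=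
  ⟨fun i => s(i, i + 1)⟩

/-- The cycle graph of length `n` in which each edge carries an orientation:
edge `i` is oriented counterclockwise (from `v i` to `v (i+1)`) if `orient i = true`,
and clockwise otherwise. -/
def cycleDigraph (n : ℕ) [NeZero n] (orient : Fin n → Bool) : Multidigraph (Fin n) (Fin n) where
  src := fun i => if orient i then i else i + 1
  tgt := fun i => if orient i then i + 1 else i

/-- A relation (e.g. a partition) on `Fin m` is non-crossing if there are no indices
`i₁ < i₂ < i₃ < i₄` with `i₁, i₃` in one block and `i₂, i₄` in a different block. -/
def NonCrossingRel {m : ℕ} (r : Fin m → Fin m → Prop) : Prop :=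
  ¬ ∃ i₁ i₂ i₃ i₄ : Fin m, i₁ < i₂ ∧ i₂ < i₃ ∧ i₃ < i₄ ∧ r i₁ i₃ ∧ r i₂ i₄ ∧ ¬ r i₁ i₂

/-- The union of a partition `σ` of the vertices `v₁, …, vₙ` (at the even positions) and
a partition `κ` of the edges `e₁, …, eₙ` (at the odd positions) of a cycle, as a relation
on the `2n` interlaced points `v₁, e₁, v₂, e₂, …, vₙ, eₙ`. -/
def interRel {n : ℕ} (σ κ : Setoid (Fin n)) (x y : Fin (2 * n)) : Prop :=
  (x.val % 2 = 0 ∧ y.val % 2 = 0 ∧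
    σ.r ⟨x.val / 2, by have := x.isLt; omega⟩ ⟨y.val / 2, by have := y.isLt; omega⟩) ∨
  (x.val % 2 = 1 ∧ y.val % 2 = 1 ∧
    κ.r ⟨x.val / 2, by have := x.isLt; omega⟩ ⟨y.val / 2, by have := y.isLt; omega⟩)

/-- `κ` is the Kreweras complement of `σ`: the largest partition of the edges such that
the union `σ ∪ κ` is non-crossing with respect to the interlaced (cyclic) order. -/
def IsKrewerasComplement {n : ℕ} (σ κ : Setoid (Fin n)) : Prop :=
  NonCrossingRel (interRel σ κ) ∧
    ∀ κ' : Setoid (Fin n), NonCrossingRel (interRel σ κ') → κ' ≤ κ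

open Classical in
/-- The block of the partition `κ` containing `i`, as a finite set. -/
noncomputable def setoidClass {n : ℕ} (κ : Setoid (Fin n)) (i : Fin n) : Finset (Fin n) :=
  Finset.univ.filter fun j => κ.r i j

open Fin.NatCast in
/-- `j` is the next element of `B` encountered strictly after `i` in the cyclic order of
`Fin n` (if `B = {i}` then `j = i` itself, one full turn later). -/
def CyclicNextIn {n : ℕ} [NeZero n] (B : Finset (Fin n)) (i j : Fin n) : Prop :=
  i ∈ B ∧ j ∈ B ∧ ∃ d : ℕ, 0 < d ∧ d ≤ n ∧ j = i + (d : Fin n) ∧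
    ∀ d' : ℕ, 0 < d' → d' < d → i + (d' : Fin n) ∉ B

/-! ## Wedges of two (di)graphs at their roots -/

/-- The canonical map from the vertices of `t'` into the wedge vertex type
`V ⊕ {x : V' // x ≠ ρ'}`, sending the root `ρ'` to (the image of) `ρ`. -/
def wedgeJ {V V' : Type} [DecidableEq V'] (ρ : V) (ρ' : V') :
    V' → V ⊕ {x : V' // x ≠ ρ'} :=
  fun x => if h : x = ρ' then Sum.inl ρ else Sum.inr ⟨x, h⟩

/-- The wedge of two multigraphs `t`, `t'` obtained by identifying `ρ ∈ t` with `ρ' ∈ t'`. -/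
def Multigraph.wedge {V E V' E' : Type} [DecidableEq V']
    (t : Multigraph V E) (t' : Multigraph V' E') (ρ : V) (ρ' : V') :
    Multigraph (V ⊕ {x : V' // x ≠ ρ'}) (E ⊕ E') :=
  ⟨fun e =>
    match e with
    | Sum.inl e => (t.ends e).map Sum.inl
    | Sum.inr e => (t'.ends e).map (wedgeJ ρ ρ')⟩

/-- The wedge of two multidigraphs `t`, `t'` obtained by identifying `ρ ∈ t` with `ρ' ∈ t'`. -/
def Multidigraph.wedge {V E V' E' : Type} [DecidableEq V']
    (t : Multidigraph V E) (t' : Multidigraph V' E') (ρ : V) (ρ' : V') :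
    Multidigraph (V ⊕ {x : V' // x ≠ ρ'}) (E ⊕ E') where
  src := fun e =>
    match e with
    | Sum.inl e => Sum.inl (t.src e)
    | Sum.inr e => wedgeJ ρ ρ' (t'.src e)
  tgt := fun e =>
    match e with
    | Sum.inl e => Sum.inl (t.tgt e)
    | Sum.inr e => wedgeJ ρ ρ' (t'.tgt e)

/-! ## Flowers (a cycle with graphs attached) and stars (trees wedged at a common root) -/

/-- The canonical map from the vertices of the `i`-th attached graph into the flower,
sending the basepoint `b i` to the cycle vertex `i`. -/
def flowerJ {n : ℕ} {W : Fin n → Type} [∀ i, DecidableEq (W i)]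
    (b : ∀ i, W i) (i : Fin n) :
    W i → Fin n ⊕ (Σ i, {x : W i // x ≠ b i}) :=
  fun x => if h : x = b i then Sum.inl i else Sum.inr ⟨i, x, h⟩

/-- The flower: a cycle of length `n` with the multigraph `d i` attached at the cycle
vertex `i` via its basepoint `b i`; the attached graphs are disjoint except through the
cycle, and `d i` meets the cycle exactly in the vertex `i`. -/
def flowerGraph {n : ℕ} [NeZero n] {W F : Fin n → Type} [∀ i, DecidableEq (W i)]
    (d : ∀ i, Multigraph (W i) (F i)) (b : ∀ i, W i) :
    Multigraph (Fin n ⊕ (Σ i, {x : W i // x ≠ b i})) (Fin n ⊕ (Σ i, F i)) :=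
  ⟨fun e =>
    match e with
    | Sum.inl k => s(Sum.inl k, Sum.inl (k + 1))
    | Sum.inr ⟨i, f⟩ => ((d i).ends f).map (flowerJ b i)⟩

/-- The canonical map from the vertices of the `i`-th tree into the star, sending the
root `r i` to the common amalgamated root. -/
def starJ {n : ℕ} {W : Fin n → Type} [∀ i, DecidableEq (W i)]
    (r : ∀ i, W i) (i : Fin n) :
    W i → Unit ⊕ (Σ i, {x : W i // x ≠ r i}) :=
  fun x => if h : x = r i then Sum.inl () else Sum.inr ⟨i, x, h⟩

/-- The star: the disjoint union of the multigraphs `t i` with all the roots `r i`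
identified to a single vertex. -/
def starGraph {n : ℕ} {W F : Fin n → Type} [∀ i, DecidableEq (W i)]
    (t : ∀ i, Multigraph (W i) (F i)) (r : ∀ i, W i) :
    Multigraph (Unit ⊕ (Σ i, {x : W i // x ≠ r i})) (Σ i, F i) :=
  ⟨fun e => ((t e.1).ends e.2).map (starJ r e.1)⟩

/-! ## Graphs of matrices -/

/-- The partition of `V` identifying the input `vin` with the output `vout` (and nothing
else). -/
def rootSetoid {V : Type} (vin vout : V) : Setoid V where
  r a b := a = b ∨ ((a = vin ∨ a = vout) ∧ (b = vin ∨ b = vout))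
  iseqv := by
    constructor
    · intro x; exact Or.inl rfl
    · rintro x y (rfl | ⟨hx, hy⟩)
      · exact Or.inl rfl
      · exact Or.inr ⟨hy, hx⟩
    · rintro x y z (rfl | ⟨hx, hy⟩) (rfl | ⟨hy', hz⟩)
      · exact Or.inl rfl
      · exact Or.inr ⟨hy', hz⟩
      · exact Or.inr ⟨hx, hy⟩
      · exact Or.inr ⟨hx, hz⟩

/-- The graph of matrices `Z_g(A₁, …, A_K)` associated to a bi-rooted multidigraph `g`
with input `vin`, output `vout` and edge ordering `o`. -/
noncomputable def graphOfMatrices {V E : Type} [Fintype V] [Fintype E] [DecidableEq V] {K N : ℕ}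
    (g : Multidigraph V E) (vin vout : V) (o : E ≃ Fin K)
    (A : Fin K → Matrix (Fin N) (Fin N) ℂ) : Matrix (Fin N) (Fin N) ℂ :=
  Matrix.of fun i j =>
    ∑ φ : V → Fin N,
      if φ vout = i ∧ φ vin = j then ∏ e : E, A (o e) (φ (g.tgt e)) (φ (g.src e)) else 0

/-! ## Set partitions as finite set systems -/

/-- `P` is a partition of the (finite) type `V`: its blocks are nonempty and every
element of `V` lies in exactly one block. -/
def IsPartitionOf (V : Type) [DecidableEq V] (P : Finset (Finset V)) : Prop :=
  (∀ B ∈ P, B.Nonempty) ∧ ∀ v : V, ∃! B, B ∈ P ∧ v ∈ B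

/-- The block of the partition `P` containing `v`. -/
def blockOf {V : Type} [DecidableEq V] (P : Finset (Finset V)) (hP : IsPartitionOf V P)
    (v : V) : {B : Finset V // B ∈ P} :=
  ⟨Finset.choose (fun B => v ∈ B) P (hP.2 v),
    Finset.choose_mem (fun B => v ∈ B) P (hP.2 v)⟩
/-!
Since the root of `t i` has degree one, every simple cycle of `T^π` through it uses the same
root edge `g`. Paths from the root to `v` in `t i` and to `v'` in `t j` are edge-disjoint in
`T^π` and end in the same block, so they close up into a simple cycle through `g` that uses an
edge of `t j` and no edge outside `t i` and `t j`. Likewise `w` and `w'` give a simple cycle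
through `g` avoiding `t j`, so `g` lies on two different simple cycles.
-/

theorem List.IsPrefix.mem_of_mem_head? {α : Type} {l₁ l₂ : List α} (h : l₁ <+: l₂)
    (hl₁ : l₁ ≠ []) {x : α} (hx : x ∈ l₂.head?) : x ∈ l₁ := by
  obtain ⟨y, l, rfl⟩ := List.exists_cons_of_ne_nil hl₁
  have hy : l₂.head? = some y := List.singleton_prefix_iff_head?_eq_some.mp
    (((List.prefix_cons_inj y).mpr List.nil_prefix).trans h)
  rw [hy, Option.mem_some_iff] at hx
  exact hx ▸ List.mem_cons_self

namespace Multigraph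

variable {V E : Type} {G : Multigraph V E}

theorem eq_of_mem_ends_of_degree_eq_one [DecidableEq V] [Fintype E] {v : V}
    (hv : G.degree v = 1) {e f : E} (he : v ∈ G.ends e) (hf : v ∈ G.ends f) : e = f := by
  classical
  set c : E → ℕ := fun e => Sym2.lift
    ⟨fun a b => (if a = v then 1 else 0) + (if b = v then 1 else 0),
      fun _ _ => add_comm _ _⟩ (G.ends e) with hc
  have hc_pos : ∀ {e : E}, v ∈ G.ends e → 1 ≤ c e := by
    intro e he
    obtain ⟨x, hx⟩ := Sym2.mem_iff_exists.mp he
    simp [hc, hx]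
  have hsum : ∑ e, c e = 1 := hv
  by_contra hne
  have hpair : c e + c f ≤ ∑ e, c e := by
    rw [← Finset.sum_pair hne]
    exact Finset.sum_le_sum_of_subset (Finset.subset_univ _)
  linarith [hc_pos he, hc_pos hf]

namespace Walk

theorem verts_eq_cons : ∀ {u v : V} (p : G.Walk u v), p.verts = u :: p.verts.tail
  | _, _, .nil _ => rfl
  | _, _, .cons _ _ _ => rfl

theorem verts_ne_nil {u v : V} (p : G.Walk u v) : p.verts ≠ [] := by
  rw [p.verts_eq_cons]
  exact List.cons_ne_nil _ _

theorem start_mem_verts {u v : V} (p : G.Walk u v) : u ∈ p.verts := by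
  rw [p.verts_eq_cons]
  exact List.mem_cons_self

theorem end_mem_verts : ∀ {u v : V} (p : G.Walk u v), v ∈ p.verts
  | _, _, .nil _ => List.mem_singleton_self _
  | _, _, .cons _ _ p => List.mem_cons_of_mem _ (end_mem_verts p)

theorem end_mem_verts_tail : ∀ {u v : V} (p : G.Walk u v), u ≠ v → v ∈ p.verts.tail
  | _, _, .nil _, h => absurd rfl h
  | _, _, .cons _ _ p, _ => end_mem_verts p

theorem eq_of_edges_eq_nil : ∀ {u v : V} (p : G.Walk u v), p.edges = [] → u = v
  | _, _, .nil _, _ => rfl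
  | _, _, .cons _ _ _, h => nomatch h

theorem exists_mem_edges_head? : ∀ {u v : V} (p : G.Walk u v), u ≠ v →
    ∃ e ∈ p.edges.head?, u ∈ G.ends e
  | _, _, .nil _, h => absurd rfl h
  | _, _, .cons e he _, _ => ⟨e, rfl, he ▸ Sym2.mem_mk_left _ _⟩

theorem mem_verts_of_mem_edges : ∀ {u v : V} (p : G.Walk u v) {e : E} {a b : V},
    e ∈ p.edges → G.ends e = s(a, b) → a ∈ p.verts
  | _, _, .nil _, _, _, _, he, _ => nomatch he
  | _, _, .cons e' huv p, e, a, b, he, hab => by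
    rcases List.mem_cons.mp he with rfl | he
    · rw [huv, Sym2.eq_iff] at hab
      rcases hab with ⟨rfl, -⟩ | ⟨-, rfl⟩
      · exact List.mem_cons_self
      · exact List.mem_cons_of_mem _ p.start_mem_verts
    · exact List.mem_cons_of_mem _ (mem_verts_of_mem_edges p he hab)

theorem IsPath.edges_nodup : ∀ {u v : V} {p : G.Walk u v}, p.IsPath → p.edges.Nodup
  | _, _, .nil _, _ => List.nodup_nil
  | _, _, .cons _ huv p, h => by
    rw [IsPath, verts, List.nodup_cons] at h
    exact List.nodup_cons.mpr
      ⟨fun he => h.1 (p.mem_verts_of_mem_edges he huv), IsPath.edges_nodup (p := p) h.2⟩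

def concat : ∀ {u v w : V}, G.Walk u v → ∀ (e : E), G.ends e = s(v, w) → G.Walk u w
  | _, _, w, .nil _, e, h => .cons e h (.nil w)
  | _, _, _, .cons e' h' p, e, h => .cons e' h' (p.concat e h)

theorem verts_concat : ∀ {u v w : V} (p : G.Walk u v) (e : E) (h : G.ends e = s(v, w)),
    (p.concat e h).verts = p.verts ++ [w]
  | _, _, _, .nil _, _, _ => rfl
  | _, _, _, .cons _ _ p, e, h => congrArg _ (verts_concat p e h)

theorem edges_concat : ∀ {u v w : V} (p : G.Walk u v) (e : E) (h : G.ends e = s(v, w)),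
    (p.concat e h).edges = p.edges ++ [e]
  | _, _, _, .nil _, _, _ => rfl
  | _, _, _, .cons _ _ p, e, h => congrArg _ (edges_concat p e h)

def reverse : ∀ {u v : V}, G.Walk u v → G.Walk v u
  | _, _, .nil v => .nil v
  | _, _, .cons e h p => p.reverse.concat e (h.trans Sym2.eq_swap)

theorem verts_reverse : ∀ {u v : V} (p : G.Walk u v), p.reverse.verts = p.verts.reverse
  | _, _, .nil _ => rfl
  | _, _, .cons e h p => by simp [reverse, verts_concat, verts_reverse p, verts]

theorem edges_reverse : ∀ {u v : V} (p : G.Walk u v), p.reverse.edges = p.edges.reverse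
  | _, _, .nil _ => rfl
  | _, _, .cons e h p => by simp [reverse, edges_concat, edges_reverse p, edges]

def append : ∀ {u v w : V}, G.Walk u v → G.Walk v w → G.Walk u w
  | _, _, _, .nil _, q => q
  | _, _, _, .cons e h p, q => .cons e h (p.append q)

theorem verts_append : ∀ {u v w : V} (p : G.Walk u v) (q : G.Walk v w),
    (p.append q).verts = p.verts.dropLast ++ q.verts
  | _, _, _, .nil _, _ => rfl
  | _, _, _, .cons _ _ p, q => by
    simp only [append, verts, verts_append p q, List.dropLast_cons_of_ne_nil p.verts_ne_nil,
      List.cons_append]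

theorem edges_append : ∀ {u v w : V} (p : G.Walk u v) (q : G.Walk v w),
    (p.append q).edges = p.edges ++ q.edges
  | _, _, _, .nil _, _ => rfl
  | _, _, _, .cons _ _ p, q => congrArg _ (edges_append p q)

section Map

variable {V' E' : Type} {H : Multigraph V' E'} (fv : V → V') (fe : E → E')
  (hm : ∀ e, H.ends (fe e) = (G.ends e).map fv)

def map : ∀ {u v : V}, G.Walk u v → H.Walk (fv u) (fv v)
  | _, _, .nil v => .nil (fv v)
  | _, _, .cons e h p => .cons (fe e) (by rw [hm, h, Sym2.map_mk]) (map p)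

theorem verts_map : ∀ {u v : V} (p : G.Walk u v), (p.map fv fe hm).verts = p.verts.map fv
  | _, _, .nil _ => rfl
  | _, _, .cons _ _ p => congrArg _ (verts_map p)

theorem edges_map : ∀ {u v : V} (p : G.Walk u v), (p.map fv fe hm).edges = p.edges.map fe
  | _, _, .nil _ => rfl
  | _, _, .cons _ _ p => congrArg _ (edges_map p)

variable {fv}

theorem IsPath.map (hfv : Function.Injective fv) {u v : V} {p : G.Walk u v} (hp : p.IsPath) :
    (p.map fv fe hm).IsPath := by
  rw [IsPath, verts_map]
  exact List.Nodup.map hfv hp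

end Map

def copy {u u' v v' : V} (p : G.Walk u v) (hu : u = u') (hv : v = v') : G.Walk u' v' :=
  hu ▸ hv ▸ p

theorem verts_copy {u u' v v' : V} (p : G.Walk u v) (hu : u = u') (hv : v = v') :
    (p.copy hu hv).verts = p.verts := by
  subst hu hv; rfl

theorem edges_copy {u u' v v' : V} (p : G.Walk u v) (hu : u = u') (hv : v = v') :
    (p.copy hu hv).edges = p.edges := by
  subst hu hv; rfl

theorem IsPath.copy {u u' v v' : V} {p : G.Walk u v} (hp : p.IsPath) (hu : u = u')
    (hv : v = v') : (p.copy hu hv).IsPath := by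
  rw [IsPath, verts_copy]
  exact hp

theorem exists_suffix : ∀ {x v : V} (p : G.Walk x v) {u : V}, u ∈ p.verts →
    ∃ q : G.Walk u v, q.verts <:+ p.verts
  | _, _, .nil _, _, hu => by
    obtain rfl := List.mem_singleton.mp hu
    exact ⟨.nil _, List.suffix_refl _⟩
  | x, _, .cons e h p, u, hu => by
    by_cases hux : u = x
    · subst hux
      exact ⟨.cons e h p, List.suffix_refl _⟩
    · obtain ⟨q, hq⟩ := exists_suffix p ((List.mem_cons.mp hu).resolve_left hux)
      exact ⟨q, hq.trans (List.suffix_cons _ _)⟩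

theorem exists_isPath : ∀ {u v : V}, G.Walk u v → ∃ q : G.Walk u v, q.IsPath
  | _, _, .nil v => ⟨.nil v, List.nodup_singleton v⟩
  | u, _, .cons e h p => by
    obtain ⟨q, hq⟩ := exists_isPath p
    by_cases hu : u ∈ q.verts
    · obtain ⟨q', hq'⟩ := q.exists_suffix hu
      exact ⟨q', hq.sublist hq'.sublist⟩
    · exact ⟨.cons e h q, List.nodup_cons.mpr ⟨hu, hq⟩⟩

theorem exists_prefix_first_mem : ∀ {u a : V} (p : G.Walk u a) (s : Set V),
    (∃ x ∈ p.verts, x ∈ s) →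
      ∃ (c : V) (q : G.Walk u c), c ∈ s ∧ (∀ x ∈ q.verts.dropLast, x ∉ s) ∧
      q.verts <+: p.verts ∧ q.edges <+: p.edges
  | _, a, .nil _, _, ⟨x, hx, hxs⟩ =>
    ⟨a, .nil a, List.mem_singleton.mp hx ▸ hxs, by simp [verts], List.prefix_refl _,
      List.prefix_refl _⟩
  | u, _, .cons e h p, s, ⟨x, hx, hxs⟩ => by
    by_cases hu : u ∈ s
    · exact ⟨u, .nil u, hu, by simp [verts], ⟨p.verts, rfl⟩, List.nil_prefix⟩
    · have hx' : x ∈ p.verts := (List.mem_cons.mp hx).resolve_left (by rintro rfl; exact hu hxs)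
      obtain ⟨c, q, hc, hfirst, hqv, hqe⟩ := exists_prefix_first_mem p s ⟨x, hx', hxs⟩
      refine ⟨c, .cons e h q, hc, ?_, List.cons_prefix_cons.mpr ⟨rfl, hqv⟩,
        List.cons_prefix_cons.mpr ⟨rfl, hqe⟩⟩
      intro x hx
      rw [verts, List.dropLast_cons_of_ne_nil q.verts_ne_nil, List.mem_cons] at hx
      rcases hx with rfl | hx
      · exact hu
      · exact hfirst x hx

theorem exists_prefix_of_mem_verts {u a : V} (p : G.Walk u a) {c : V} (hc : c ∈ p.verts) :
    ∃ q : G.Walk u c, q.verts <+: p.verts ∧ q.edges <+: p.edges := by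
  obtain ⟨c', q, rfl, -, hqv, hqe⟩ := p.exists_prefix_first_mem {c} ⟨c, hc, rfl⟩
  exact ⟨q, hqv, hqe⟩

/-- Follow `P` until it first meets `Q` again, then return along `Q`. -/
theorem exists_isSimpleCycleOn_of_isPath [DecidableEq E] {R a : V} {P Q : G.Walk R a}
    (hP : P.IsPath) (hQ : Q.IsPath) (ha : a ≠ R) (hPQ : P.edges.Disjoint Q.edges) :
    ∃ S, G.IsSimpleCycleOn S ∧ (∀ e ∈ S, e ∈ P.edges ∨ e ∈ Q.edges) ∧
      (∀ e ∈ P.edges.head?, e ∈ S) ∧ (∀ e ∈ Q.edges.head?, e ∈ S) := by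
  have hRQ : R ∉ Q.verts.tail := by
    have := hQ
    rw [IsPath, Q.verts_eq_cons, List.nodup_cons] at this
    exact this.1
  obtain ⟨c, P₁, hc, hfirst, hP₁v, hP₁e⟩ := P.exists_prefix_first_mem {x | x ∈ Q.verts.tail}
    ⟨a, P.end_mem_verts, Q.end_mem_verts_tail ha.symm⟩
  have hcR : c ≠ R := fun h => hRQ (h ▸ hc)
  obtain ⟨Q₁, hQ₁v, hQ₁e⟩ :=
    Q.exists_prefix_of_mem_verts (List.mem_of_mem_tail hc)
  have hP₁ : P₁.IsPath := hP.sublist hP₁v.sublist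
  have hQ₁ : Q₁.IsPath := hQ.sublist hQ₁v.sublist
  have hP₁ne : P₁.edges ≠ [] := fun h => hcR (P₁.eq_of_edges_eq_nil h).symm
  have hQ₁ne : Q₁.edges ≠ [] := fun h => hcR (Q₁.eq_of_edges_eq_nil h).symm
  have hQ₁tail : Q₁.verts.tail <+: Q.verts.tail := by
    rw [Q₁.verts_eq_cons, Q.verts_eq_cons, List.cons_prefix_cons] at hQ₁v
    exact hQ₁v.2
  refine ⟨_, ⟨R, P₁.append Q₁.reverse, ?_, ?_, ?_, rfl⟩, ?_, ?_, ?_⟩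
  · rw [edges_append]
    exact fun h => hP₁ne (List.append_eq_nil_iff.mp h).1
  · rw [edges_append, edges_reverse, List.nodup_append, List.nodup_reverse]
    refine ⟨hP₁.edges_nodup, hQ₁.edges_nodup, ?_⟩
    rintro e heP _ heQ rfl
    exact hPQ (hP₁e.sublist.mem heP) (hQ₁e.sublist.mem (List.mem_reverse.mp heQ))
  · have hrev : Q₁.verts.reverse.dropLast = Q₁.verts.tail.reverse := by
      rw [Q₁.verts_eq_cons, List.reverse_cons, List.dropLast_concat, List.tail_cons]
    rw [verts_append, verts_reverse,
      List.dropLast_append_of_ne_nil (List.reverse_ne_nil_iff.mpr Q₁.verts_ne_nil), hrev,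
      List.nodup_append, List.nodup_reverse]
    refine ⟨hP₁.sublist (List.dropLast_sublist _), hQ₁.sublist (List.tail_sublist _), ?_⟩
    rintro x hxP _ hxQ rfl
    exact hfirst x hxP (hQ₁tail.sublist.mem (List.mem_reverse.mp hxQ))
  · intro e he
    rw [edges_append, edges_reverse, List.mem_toFinset, List.mem_append,
      List.mem_reverse] at he
    exact he.imp hP₁e.sublist.mem hQ₁e.sublist.mem
  · intro e he
    rw [edges_append, List.mem_toFinset]
    exact List.mem_append_left _ (hP₁e.mem_of_mem_head? hP₁ne he)
  · intro e he
    rw [edges_append, edges_reverse, List.mem_toFinset]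
    exact List.mem_append_right _
      (List.mem_reverse.mpr (hQ₁e.mem_of_mem_head? hQ₁ne he))

end Walk

theorem ReachAvoid.nonempty_walk {F : Set E} {u v : V} (h : G.ReachAvoid F u v) :
    Nonempty (G.Walk u v) := by
  induction h with
  | refl => exact ⟨.nil _⟩
  | tail e _ hvw _ ih => exact ⟨ih.some.concat e hvw⟩

theorem Connected.exists_isPath (h : G.Connected) (u v : V) : ∃ p : G.Walk u v, p.IsPath :=
  (h u v).nonempty_walk.some.exists_isPath

end Multigraph

section Star

open Multigraph

variable {n : ℕ} {W F : Fin n → Type} [∀ i, DecidableEq (W i)]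
  {t : ∀ i, Multigraph (W i) (F i)} {r : ∀ i, W i}
  {π : Setoid (Unit ⊕ (Σ i, {x : W i // x ≠ r i}))}

theorem starJ_root (i : Fin n) : starJ r i (r i) = Sum.inl () := dif_pos rfl

theorem quot_starGraph_ends (m : Fin n) (f : F m) :
    ((starGraph t r).quot π).ends ⟨m, f⟩ =
      ((t m).ends f).map (fun x => Quotient.mk π (starJ r m x)) :=
  Sym2.map_map _

theorem exists_isSimpleCycleOn_quot_starGraph [∀ i, DecidableEq (F i)]
    (hdisc : ∀ (i : Fin n) (a b : W i), π.r (starJ r i a) (starJ r i b) → a = b)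
    {i j : Fin n} (hij : i ≠ j) (hci : (t i).Connected) (hcj : (t j).Connected)
    {v : W i} (hv : v ≠ r i) {v' : W j} (hvv' : π.r (starJ r i v) (starJ r j v')) :
    ∃ S, ((starGraph t r).quot π).IsSimpleCycleOn S ∧ (∀ e ∈ S, e.1 = i ∨ e.1 = j) ∧
      (∃ g, r i ∈ (t i).ends g ∧ ⟨i, g⟩ ∈ S) ∧ ∃ f, ⟨j, f⟩ ∈ S := by
  set φ : ∀ m, W m → Quotient π := fun m x => Quotient.mk π (starJ r m x)
  have hφ : ∀ m, Function.Injective (φ m) := fun m a b h => hdisc m a b (Quotient.exact h)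
  obtain ⟨p, hp⟩ := hci.exists_isPath (r i) v
  obtain ⟨q, hq⟩ := hcj.exists_isPath (r j) v'
  have hroot : φ j (r j) = φ i (r i) := by simp only [φ, starJ_root]
  let P := p.map (φ i) (Sigma.mk i) (quot_starGraph_ends i)
  let Q := (q.map (φ j) (Sigma.mk j) (quot_starGraph_ends j)).copy hroot
    (Quotient.sound (π.symm hvv'))
  have hPe : P.edges = p.edges.map (Sigma.mk i) := Walk.edges_map _ _ _ p
  have hQe : Q.edges = q.edges.map (Sigma.mk j) := by
    rw [Walk.edges_copy, Walk.edges_map]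
  have hne : φ i v ≠ φ i (r i) := fun h => hv (hφ i h)
  have hPQ : P.edges.Disjoint Q.edges := by
    rw [hPe, hQe]
    intro e heP heQ
    obtain ⟨_, -, rfl⟩ := List.mem_map.mp heP
    obtain ⟨_, -, he⟩ := List.mem_map.mp heQ
    exact hij (congrArg Sigma.fst he).symm
  obtain ⟨S, hS, hSPQ, hPS, hQS⟩ := Walk.exists_isSimpleCycleOn_of_isPath
    (hp.map (Sigma.mk i) (quot_starGraph_ends i) (hφ i))
    ((hq.map (Sigma.mk j) (quot_starGraph_ends j) (hφ j)).copy hroot _) hne hPQ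
  refine ⟨S, hS, fun e he => (hSPQ e he).imp ?_ ?_, ?_, ?_⟩
  · intro heP
    obtain ⟨_, -, rfl⟩ := List.mem_map.mp (hPe ▸ heP)
    rfl
  · intro heQ
    obtain ⟨_, -, rfl⟩ := List.mem_map.mp (hQe ▸ heQ)
    rfl
  · obtain ⟨g, hg, hrg⟩ := p.exists_mem_edges_head? hv.symm
    refine ⟨g, hrg, hPS _ ?_⟩
    rw [hPe, List.head?_map, Option.mem_def.mp hg]
    rfl
  · obtain ⟨e, he, -⟩ := Q.exists_mem_edges_head? hne.symm
    obtain ⟨f, -, rfl⟩ := List.mem_map.mp (hQe ▸ List.mem_of_mem_head? he)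
    exact ⟨f, hQS _ he⟩

end Star

theorem stmt_15_general {n : ℕ} {W F : Fin n → Type}
    [∀ i, Fintype (F i)]
    [∀ i, DecidableEq (W i)] [∀ i, DecidableEq (F i)]
    (t : ∀ i, Multigraph (W i) (F i)) (r : ∀ i, W i)
    (htree : ∀ i, (t i).IsTree)
    (hroot : ∀ i, (t i).degree (r i) = 1)
    (π : Setoid (Unit ⊕ (Σ i, {x : W i // x ≠ r i})))
    (hdisc : ∀ (i : Fin n) (a b : W i), π.r (starJ r i a) (starJ r i b) → a = b)
    (i j k : Fin n) (hjk : j ≠ k) (hij : i ≠ j) (hik : i ≠ k)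
    (v w : W i) (hv : v ≠ r i) (hw : w ≠ r i)
    (v' : W j) (w' : W k)
    (hvv' : π.r (starJ r i v) (starJ r j v'))
    (hww' : π.r (starJ r i w) (starJ r k w')) :
    ¬ ((starGraph t r).quot π).IsCactus := by
  intro hcactus
  obtain ⟨S₁, hS₁, -, ⟨g₁, hg₁, hg₁S₁⟩, f, hfS₁⟩ := exists_isSimpleCycleOn_quot_starGraph
    hdisc hij (htree i).1 (htree j).1 hv hvv'
  obtain ⟨S₂, hS₂, hS₂ik, ⟨g₂, hg₂, hg₂S₂⟩, -⟩ := exists_isSimpleCycleOn_quot_starGraph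
    hdisc hik (htree i).1 (htree k).1 hw hww'
  obtain rfl : g₁ = g₂ := Multigraph.eq_of_mem_ends_of_degree_eq_one (hroot i) hg₁ hg₂
  obtain rfl : S₁ = S₂ := (hcactus.2 ⟨i, g₁⟩).unique ⟨hS₁, hg₁S₁⟩ ⟨hS₂, hg₂S₂⟩
  rcases hS₂ik _ hfS₁ with h | h
  · exact hij h.symm
  · exact hjk h

/-- Let `T` be the star obtained from `n ≥ 3` finite rooted trees
(each with at least two vertices and root of degree one) by identifying all the roots to
a single vertex `ρ`, and let `π` be a partition of the vertices of `T` that is discrete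
on each tree.  If some tree `t i` has vertices `v, w ≠ ρ` identified by `π` with
vertices `v' ≠ ρ` of `t j` and `w' ≠ ρ` of `t k` for two different trees `j ≠ k` (both
different from `i`), then the quotient `T^π` is not a cactus. -/
theorem stmt_15 {n : ℕ} [NeZero n] (hn : 3 ≤ n) {W F : Fin n → Type}
    [∀ i, Fintype (W i)] [∀ i, Fintype (F i)]
    [∀ i, DecidableEq (W i)] [∀ i, DecidableEq (F i)]
    (t : ∀ i, Multigraph (W i) (F i)) (r : ∀ i, W i)
    (htree : ∀ i, (t i).IsTree)
    (hcard : ∀ i, 1 < Fintype.card (W i))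
    (hroot : ∀ i, (t i).degree (r i) = 1)
    (π : Setoid (Unit ⊕ (Σ i, {x : W i // x ≠ r i})))
    (hdisc : ∀ (i : Fin n) (a b : W i), π.r (starJ r i a) (starJ r i b) → a = b)
    (i j k : Fin n) (hjk : j ≠ k) (hij : i ≠ j) (hik : i ≠ k)
    (v w : W i) (hv : v ≠ r i) (hw : w ≠ r i)
    (v' : W j) (hv' : v' ≠ r j) (w' : W k) (hw' : w' ≠ r k)
    (hvv' : π.r (starJ r i v) (starJ r j v'))
    (hww' : π.r (starJ r i w) (starJ r k w')) :
    ¬ ((starGraph t r).quot π).IsCactus :=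
  stmt_15_general t r htree hroot π hdisc i j k hjk hij hik v w hv hw v' w' hvv' hww'
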